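/- Let (X,d) be a compact metric space, f : X → X a continuous surjective map, and φ : X → ℝ a continuous function that is strictly negative on X. For n ≥ 1 let φₙ(y) := φ(y) + φ(fy) + … + φ(f^{n−1}y) be the n-th Birkhoff sum. Assume that for every n ≥ 1 and every ε > 0 the ε-inverse pressure P⁻_{fⁿ}(·, X, ε) of f^n is finitely valued, and let tₙ(ε) and tₙ denote the unique zeros of the strictly decreasing maps t ↦ P⁻_{fⁿ}(t·φₙ, X, ε) and t ↦ P⁻_{fⁿ}(t·φₙ, X) respectively. Then for all positive integers n, p and all ε > 0 one has tₙ(ε) ≥ t_{np}(ε), and tₙ = t₁ for every n ≥ 1. -/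

import Mathlib

open Filter Set Function
open scoped ENNReal NNReal BigOperators

variable {X : Type*} [MetricSpace X]

/-- A finite prehistory (branch of consecutive preimages) for `f`:
`pts 0` is the base point and `pts (i+1)` is a preimage of `pts i` for `i < len`. -/
structure Prehistory (f : X → X) where
  len : ℕ
  pts : ℕ → X
  isPre : ∀ i < len, f (pts (i + 1)) = pts i

namespace Prehistory

variable {f : X → X}

/-- The set `X(C, ε)` of points `ε`-shadowed (in backward time) by the prehistory `C`. -/
def shadow (C : Prehistory f) (ε : ℝ) : Set X :=
  {z | ∃ zs : ℕ → X, zs 0 = z ∧ (∀ i < C.len, f (zs (i + 1)) = zs i) ∧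
    ∀ i ≤ C.len, dist (zs i) (C.pts i) < ε}

/-- The consecutive sum `S⁻_{n(C)} φ (C) = φ(y) + φ(y₋₁) + ⋯ + φ(y₋ₘ)`. -/
noncomputable def consSum (C : Prehistory f) (φ : X → ℝ) : ℝ :=
  ∑ i ∈ Finset.range (C.len + 1), φ (C.pts i)

end Prehistory

/-- `Γ` `ε`-covers `Y` if `Y ⊆ ⋃_{C ∈ Γ} X(C, ε)`. -/
def ECovers {f : X → X} (Γ : Set (Prehistory f)) (Y : Set X) (ε : ℝ) : Prop :=
  Y ⊆ ⋃ C ∈ Γ, C.shadow ε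

/-- `M⁻_f(λ, φ, Y, N, ε)`. -/
noncomputable def invM (f : X → X) (lam : ℝ) (φ : X → ℝ) (Y : Set X) (N : ℕ) (ε : ℝ) :
    ℝ≥0∞ :=
  ⨅ (Γ : Set (Prehistory f)) (_ : ECovers Γ Y ε ∧ ∀ C ∈ Γ, N ≤ C.len),
    ∑' C : Γ, ENNReal.ofReal (Real.exp (-lam * (C.1.len : ℝ) + C.1.consSum φ))

/-- `M⁻_f(λ, φ, Y, ε) = lim_{N → ∞} M⁻_f(λ, φ, Y, N, ε)`; the quantity is nondecreasing
in `N`, so the limit is the supremum. -/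
noncomputable def invMLim (f : X → X) (lam : ℝ) (φ : X → ℝ) (Y : Set X) (ε : ℝ) : ℝ≥0∞ :=
  ⨆ N : ℕ, invM f lam φ Y N ε

/-- The `ε`-inverse pressure `P⁻_f(φ, Y, ε) = inf {λ : M⁻_f(λ, φ, Y, ε) = 0}`. -/
noncomputable def invPressEps (f : X → X) (φ : X → ℝ) (Y : Set X) (ε : ℝ) : EReal :=
  sInf {l : EReal | ∃ lam : ℝ, l = (lam : EReal) ∧ invMLim f lam φ Y ε = 0}

/-- The inverse pressure `P⁻_f(φ, Y) = lim_{ε → 0} P⁻_f(φ, Y, ε)`; the `ε`-inverse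
pressure is nonincreasing in `ε`, so the limit is the supremum over `ε > 0`. -/
noncomputable def invPress (f : X → X) (φ : X → ℝ) (Y : Set X) : EReal :=
  ⨆ (ε : ℝ) (_ : 0 < ε), invPressEps f φ Y ε

/-- The `n`-th Birkhoff sum `S_n φ (x) = φ(x) + φ(f x) + ⋯ + φ(f^{n-1} x)`. -/
noncomputable def birkhoff (f : X → X) (φ : X → ℝ) (n : ℕ) (x : X) : ℝ :=
  ∑ i ∈ Finset.range n, φ (f^[i] x)

/-!
Sampling every `n`-th point of an `f`-prehistory gives an `f^[n]`-prehistory, and inserting the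
`n - 1` intermediate preimages between consecutive points of an `f^[n]`-prehistory gives an
`f`-prehistory of `n` times the length; both maps preserve shadows (the second after shrinking
`ε` to a `δ` that controls `f, …, f^[n-1]`) and change the weights `exp (-λ n(C) + S⁻ψ(C))`,
with `S_n ψ` on the `f^[n]` side and `n λ` in place of `λ`, only by a bounded factor. Hence
`P⁻_{f^n}(S_n ψ, ε) ≤ n P⁻_f(ψ, ε)`, `P⁻_f(ψ, ε) ≤ P⁻_{f^n}(S_n ψ, δ) / n`, and `P⁻_{f^n}(S_n ψ)`
vanishes exactly when `P⁻_f(ψ)` does. Since `φ ≤ -δ₀ < 0`, the pressure of `t φ` decreases in `t`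
at rate at least `δ₀`, so it has at most one zero; applied to `S_{np} φ = S_p^{f^n}(S_n φ)` and
to `t_n φ` this gives both claims.
-/

section

variable {α : Type*} {f : α → α}

theorem iterate_apply_of_chain {L : ℕ} {zs : ℕ → α} (h : ∀ i < L, f (zs (i + 1)) = zs i)
    {a j : ℕ} (hj : a + j ≤ L) : f^[j] (zs (a + j)) = zs a := by
  induction j with
  | zero => rfl
  | succ j ih => rw [iterate_succ_apply, ← add_assoc, h _ (by omega), ih (by omega)]

theorem le_mul_add_sub_one_div {n : ℕ} (hn : 0 < n) (k : ℕ) : k ≤ n * ((k + n - 1) / n) := by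
  have := Nat.lt_mul_div_succ (k + n - 1) hn
  rw [mul_add_one] at this
  omega

theorem add_sub_one_div_le {n k i : ℕ} (hn : 0 < n) (hk : k ≤ n * i) : (k + n - 1) / n ≤ i :=
  (Nat.div_le_iff_le_mul_add_pred hn).2 (by omega)

theorem abs_sum_le_card_mul {ι : Type*} (s : Finset ι) {u : ι → ℝ} {B : ℝ}
    (h : ∀ i ∈ s, |u i| ≤ B) : |∑ i ∈ s, u i| ≤ s.card * B :=
  (Finset.abs_sum_le_sum_abs _ _).trans (by simpa using Finset.sum_le_card_nsmul s _ B h)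

theorem abs_birkhoff_le {ψ : α → ℝ} {B : ℝ} (hB : ∀ x, |ψ x| ≤ B) (n : ℕ) (x : α) :
    |birkhoff f ψ n x| ≤ n * B :=
  (abs_sum_le_card_mul (Finset.range n) fun i _ => hB (f^[i] x)).trans_eq (by simp)

theorem birkhoff_neg {ψ : α → ℝ} (hψ : ∀ x, ψ x < 0) {n : ℕ} (hn : 0 < n) (x : α) :
    birkhoff f ψ n x < 0 :=
  Finset.sum_neg (fun _ _ => hψ _) (Finset.nonempty_range_iff.2 hn.ne')

theorem birkhoff_continuous [TopologicalSpace α] (hf : Continuous f) {ψ : α → ℝ}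
    (hψ : Continuous ψ) (n : ℕ) : Continuous (birkhoff f ψ n) :=
  continuous_finsetSum _ fun i _ => hψ.comp (hf.iterate i)

theorem birkhoff_one (ψ : α → ℝ) : birkhoff f ψ 1 = ψ := by
  funext x
  simp [birkhoff]

theorem birkhoff_const_mul (a : ℝ) (ψ : α → ℝ) (n : ℕ) :
    birkhoff f (fun x => a * ψ x) n = fun x => a * birkhoff f ψ n x := by
  funext x
  exact (Finset.mul_sum _ _ _).symm

theorem birkhoff_iterate_birkhoff (ψ : α → ℝ) (n p : ℕ) :
    birkhoff (f^[n]) (birkhoff f ψ n) p = birkhoff f ψ (n * p) := by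
  funext x
  induction p with
  | zero => simp [birkhoff]
  | succ p ih =>
    have hsplit : birkhoff f ψ (n * p + n) x =
        birkhoff f ψ (n * p) x + birkhoff f ψ n (f^[n * p] x) :=
      birkhoffSum_add f ψ (n * p) n x
    rw [mul_add_one, hsplit, ← ih, iterate_mul]
    exact Finset.sum_range_succ _ _

theorem sum_range_mul_eq_sum_birkhoff {L : ℕ} {zs : ℕ → α}
    (h : ∀ i < L, f (zs (i + 1)) = zs i) (ψ : α → ℝ) {n M : ℕ} (hM : n * M ≤ L) :
    ∑ k ∈ Finset.range (n * M), ψ (zs (k + 1)) =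
      ∑ i ∈ Finset.range M, birkhoff f ψ n (zs (n * (i + 1))) := by
  induction M with
  | zero => simp
  | succ M ih =>
    rw [mul_add_one] at hM ⊢
    rw [Finset.sum_range_add, Finset.sum_range_succ, ih (by omega), mul_add_one,
      ← Finset.sum_range_reflect (fun j => ψ (zs (n * M + j + 1))) n]
    congr 1
    refine Finset.sum_congr rfl fun j hj => ?_
    have hj := Finset.mem_range.1 hj
    have hidx : n * M + n = n * M + (n - 1 - j) + 1 + j := by omega
    rw [hidx, iterate_apply_of_chain h (by omega)]

namespace Prehistory

theorem mul_le_len_of_le_div (C : Prehistory f) {n i : ℕ} (hi : i ≤ C.len / n) :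
    n * i ≤ C.len :=
  (Nat.mul_le_mul_left n hi).trans (Nat.mul_div_le _ _)

/-- Position `k` lies in the block ending at `n * ⌈k / n⌉` and is reached from there by
`n * ⌈k / n⌉ - k` steps of `f`. -/
def stretchPts (n : ℕ) (C : Prehistory (f^[n])) (k : ℕ) : α :=
  f^[n * ((k + n - 1) / n) - k] (C.pts ((k + n - 1) / n))

theorem stretchPts_eq {n : ℕ} (hn : 0 < n) (C : Prehistory (f^[n])) {k i : ℕ}
    (hk : k ≤ n * i) (hi : i ≤ C.len) : stretchPts n C k = f^[n * i - k] (C.pts i) := by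
  rw [stretchPts]
  set b := (k + n - 1) / n
  have hkb : k ≤ n * b := le_mul_add_sub_one_div hn k
  have hbi : b ≤ i := add_sub_one_div_le hn hk
  have hchain : (f^[n])^[i - b] (C.pts i) = C.pts b := by
    simpa [Nat.add_sub_cancel' hbi] using iterate_apply_of_chain C.isPre (a := b) (j := i - b)
      (by omega)
  have hmul : n * i = n * b + n * (i - b) := by rw [← mul_add, Nat.add_sub_cancel' hbi]
  rw [← hchain, ← iterate_mul, ← iterate_add_apply]
  congr 1
  omega

def stretch (n : ℕ) (C : Prehistory (f^[n])) : Prehistory f where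
  len := n * C.len
  pts := stretchPts n C
  isPre k hk := by
    have hn : 0 < n := Nat.pos_of_ne_zero (by rintro rfl; simp at hk)
    set i := (k + 1 + n - 1) / n
    have hki : k + 1 ≤ n * i := le_mul_add_sub_one_div hn (k + 1)
    have hiC : i ≤ C.len := add_sub_one_div_le hn hk
    rw [stretchPts_eq hn C hki hiC, stretchPts_eq hn C (by omega) hiC, ← iterate_succ_apply' f]
    congr 2
    omega

theorem stretch_pts_mul {n : ℕ} (hn : 0 < n) (C : Prehistory (f^[n])) {i : ℕ}
    (hi : i ≤ C.len) : (stretch n C).pts (n * i) = C.pts i := by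
  show stretchPts n C (n * i) = _
  simpa using stretchPts_eq hn C le_rfl hi

def sample (n : ℕ) (C : Prehistory f) : Prehistory (f^[n]) where
  len := C.len / n
  pts i := C.pts (n * i)
  isPre i hi := by
    rw [mul_add_one]
    exact iterate_apply_of_chain C.isPre (C.mul_le_len_of_le_div hi)

theorem consSum_congr {g : α → α} {C D : Prehistory g} (ψ : α → ℝ) (hlen : C.len = D.len)
    (hpts : ∀ i ≤ C.len, C.pts i = D.pts i) : C.consSum ψ = D.consSum ψ := by
  rw [consSum, consSum, ← hlen]
  exact Finset.sum_congr rfl fun i hi => by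
    rw [hpts i (Nat.lt_succ_iff.1 (Finset.mem_range.1 hi))]

theorem consSum_sample_add (n : ℕ) (C : Prehistory f) (ψ : α → ℝ) :
    (sample n C).consSum (birkhoff f ψ n) + ψ (C.pts 0) +
        ∑ k ∈ Finset.Ico (n * (C.len / n)) C.len, ψ (C.pts (k + 1)) =
      C.consSum ψ + birkhoff f ψ n (C.pts 0) := by
  have hM := Nat.mul_div_le C.len n
  rw [consSum, consSum, Finset.sum_range_succ', Finset.sum_range_succ',
    ← Finset.sum_range_add_sum_Ico _ hM, sum_range_mul_eq_sum_birkhoff C.isPre ψ hM]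
  simp only [sample, mul_zero]
  ring

theorem consSum_sample_le {n : ℕ} (hn : 0 < n) (C : Prehistory f) {ψ : α → ℝ} {B : ℝ}
    (hB : ∀ x, |ψ x| ≤ B) :
    (sample n C).consSum (birkhoff f ψ n) ≤ C.consSum ψ + (2 * n + 1) * B := by
  have hB0 : 0 ≤ B := (abs_nonneg _).trans (hB (C.pts 0))
  have hcard : ((Finset.Ico (n * (C.len / n)) C.len).card : ℝ) ≤ n := by
    rw [Nat.card_Ico]
    have := Nat.mod_add_div C.len n
    have := Nat.mod_lt C.len hn
    exact_mod_cast (by omega : C.len - n * (C.len / n) ≤ n)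
  have htail := abs_sum_le_card_mul (Finset.Ico (n * (C.len / n)) C.len)
    fun k _ => hB (C.pts (k + 1))
  have htail' := (abs_le.1 (htail.trans (mul_le_mul_of_nonneg_right hcard hB0))).1
  have hψ0 := (abs_le.1 (hB (C.pts 0))).1
  have hS0 := (abs_le.1 (abs_birkhoff_le (f := f) hB n (C.pts 0))).2
  linarith [consSum_sample_add n C ψ]

theorem consSum_stretch_add {n : ℕ} (hn : 0 < n) (C : Prehistory (f^[n])) (ψ : α → ℝ) :
    (stretch n C).consSum ψ + birkhoff f ψ n (C.pts 0) =
      C.consSum (birkhoff f ψ n) + ψ (C.pts 0) := by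
  have hlen : (stretch n C).len / n = C.len := Nat.mul_div_cancel_left _ hn
  have hsample : (sample n (stretch n C)).consSum (birkhoff f ψ n) =
      C.consSum (birkhoff f ψ n) :=
    consSum_congr _ hlen fun i hi => stretch_pts_mul hn C (hlen ▸ hi)
  have h0 : (stretch n C).pts 0 = C.pts 0 := by
    simpa using stretch_pts_mul hn C (Nat.zero_le _)
  have := consSum_sample_add n (stretch n C) ψ
  rw [hsample, h0, hlen, show n * C.len = (stretch n C).len from rfl, Finset.Ico_self,
    Finset.sum_empty, add_zero] at this
  exact this.symm

theorem consSum_le_add (C : Prehistory f) {ψ₁ ψ₂ : α → ℝ} {c : ℝ}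
    (h : ∀ x, ψ₁ x ≤ ψ₂ x + c) : C.consSum ψ₁ ≤ C.consSum ψ₂ + (C.len + 1) * c := by
  calc C.consSum ψ₁ ≤ ∑ i ∈ Finset.range (C.len + 1), (ψ₂ (C.pts i) + c) :=
        Finset.sum_le_sum fun i _ => h _
    _ = C.consSum ψ₂ + (C.len + 1) * c := by
        rw [Finset.sum_add_distrib, Finset.sum_const, Finset.card_range, nsmul_eq_mul]
        push_cast
        rfl

end Prehistory

end

namespace Prehistory

variable {f : X → X}

theorem mem_shadow_iff {C : Prehistory f} {ε : ℝ} {z : X} :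
    z ∈ C.shadow ε ↔ ∃ D : Prehistory f, D.len = C.len ∧ D.pts 0 = z ∧
      ∀ i ≤ C.len, dist (D.pts i) (C.pts i) < ε :=
  ⟨fun ⟨zs, h0, hpre, hd⟩ => ⟨⟨C.len, zs, hpre⟩, rfl, h0, hd⟩,
    fun ⟨D, hlen, h0, hd⟩ => ⟨D.pts, h0, hlen ▸ D.isPre, hd⟩⟩

theorem shadow_subset_sample_shadow (n : ℕ) (C : Prehistory f) (ε : ℝ) :
    C.shadow ε ⊆ (sample n C).shadow ε := by
  intro z hz
  obtain ⟨D, hlen, h0, hd⟩ := mem_shadow_iff.1 hz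
  exact mem_shadow_iff.2 ⟨sample n D, by simp only [sample, hlen], by simpa [sample] using h0,
    fun i hi => hd _ (C.mul_le_len_of_le_div hi)⟩

theorem shadow_subset_stretch_shadow {n : ℕ} (hn : 0 < n) {ε δ : ℝ}
    (hδ : ∀ x y : X, dist x y < δ → ∀ j < n, dist (f^[j] x) (f^[j] y) < ε)
    (C : Prehistory (f^[n])) : C.shadow δ ⊆ (stretch n C).shadow ε := by
  intro z hz
  obtain ⟨D, hlen, h0, hd⟩ := mem_shadow_iff.1 hz
  refine mem_shadow_iff.2 ⟨stretch n D, by simp only [stretch, hlen], ?_, fun k hk => ?_⟩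
  · simpa [h0] using stretch_pts_mul hn D (i := 0) (Nat.zero_le _)
  · have hb : (k + n - 1) / n ≤ C.len := add_sub_one_div_le hn hk
    have hj : n * ((k + n - 1) / n) - k < n := by
      have := Nat.mul_div_le (k + n - 1) n
      omega
    exact hδ _ _ (hd _ hb) _ hj

end Prehistory

section Compact

variable [CompactSpace X] {g : X → X} {ψ : X → ℝ}

theorem exists_pos_forall_le_neg (hψ : Continuous ψ) (hneg : ∀ x, ψ x < 0) :
    ∃ δ > 0, ∀ x, ψ x ≤ -δ := by
  cases isEmpty_or_nonempty X
  · exact ⟨1, one_pos, isEmptyElim⟩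
  · obtain ⟨x₀, -, hx₀⟩ := isCompact_univ.exists_isMaxOn Set.univ_nonempty hψ.continuousOn
    exact ⟨-ψ x₀, neg_pos.2 (hneg x₀), fun x => by simpa using hx₀ (Set.mem_univ x)⟩

theorem exists_forall_abs_le (hψ : Continuous ψ) : ∃ B, ∀ x, |ψ x| ≤ B := by
  obtain ⟨B, hB⟩ := isCompact_univ.exists_bound_of_continuousOn hψ.continuousOn
  exact ⟨B, fun x => hB x (Set.mem_univ x)⟩

theorem exists_forall_dist_iterate_lt (hg : Continuous g) (n : ℕ) {ε : ℝ} (hε : 0 < ε) :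
    ∃ δ > 0, ∀ x y : X, dist x y < δ → ∀ j < n, dist (g^[j] x) (g^[j] y) < ε := by
  have hunif : UniformContinuous fun x (j : Fin n) => g^[j] x :=
    CompactSpace.uniformContinuous_of_continuous (continuous_pi fun j => hg.iterate j)
  obtain ⟨δ, hδ, h⟩ := Metric.uniformContinuous_iff.1 hunif ε hε
  exact ⟨δ, hδ, fun x y hxy j hj =>
    (dist_le_pi_dist (fun j : Fin n => g^[j] x) (fun j => g^[j] y) ⟨j, hj⟩).trans_lt (h hxy)⟩

end Compact

section InversePressure

variable {g g₁ g₂ : X → X} {ψ ψ₁ ψ₂ : X → ℝ} {Y : Set X}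

theorem invM_le_invM_mul (Φ : Prehistory g₂ → Prehistory g₁) {ε₁ ε₂ lam₁ lam₂ c : ℝ}
    (ν : ℕ → ℕ) (hshadow : ∀ C, C.shadow ε₂ ⊆ (Φ C).shadow ε₁)
    (hlen : ∀ N C, ν N ≤ C.len → N ≤ (Φ C).len)
    (hweight : ∀ C, -lam₁ * ((Φ C).len : ℝ) + (Φ C).consSum ψ₁ ≤
      -lam₂ * (C.len : ℝ) + C.consSum ψ₂ + c) (N : ℕ) :
    invM g₁ lam₁ ψ₁ Y N ε₁ ≤ invM g₂ lam₂ ψ₂ Y (ν N) ε₂ * ENNReal.ofReal (Real.exp c) := by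
  have hK : ENNReal.ofReal (Real.exp c) ≠ 0 := by simpa using Real.exp_pos c
  rw [← ENNReal.div_le_iff hK ENNReal.ofReal_ne_top]
  refine le_iInf₂ fun Γ ⟨hcov, hΓlen⟩ => ?_
  rw [ENNReal.div_le_iff hK ENNReal.ofReal_ne_top]
  have hcov' : ECovers (Φ '' Γ) Y ε₁ := fun y hy => by
    obtain ⟨C, hC, hyC⟩ := Set.mem_iUnion₂.1 (hcov hy)
    exact Set.mem_iUnion₂.2 ⟨Φ C, Set.mem_image_of_mem Φ hC, hshadow C hyC⟩
  have hlen' : ∀ D ∈ Φ '' Γ, N ≤ D.len := by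
    rintro D ⟨C, hC, rfl⟩
    exact hlen N C (hΓlen C hC)
  have hsurj : Surjective fun C : Γ => (⟨Φ C, Set.mem_image_of_mem Φ C.2⟩ : Φ '' Γ) := by
    rintro ⟨D, C, hC, rfl⟩
    exact ⟨⟨C, hC⟩, rfl⟩
  calc invM g₁ lam₁ ψ₁ Y N ε₁
      ≤ ∑' D : Φ '' Γ, ENNReal.ofReal (Real.exp (-lam₁ * (D.1.len : ℝ) + D.1.consSum ψ₁)) :=
        iInf₂_le (Φ '' Γ) ⟨hcov', hlen'⟩
    _ ≤ ∑' C : Γ, ENNReal.ofReal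
          (Real.exp (-lam₁ * ((Φ C.1).len : ℝ) + (Φ C.1).consSum ψ₁)) :=
        ENNReal.tsum_le_tsum_comp_of_surjective hsurj _
    _ ≤ ∑' C : Γ, ENNReal.ofReal (Real.exp (-lam₂ * (C.1.len : ℝ) + C.1.consSum ψ₂)) *
          ENNReal.ofReal (Real.exp c) := by
        refine ENNReal.tsum_le_tsum fun C => ?_
        rw [← ENNReal.ofReal_mul (Real.exp_nonneg _), ← Real.exp_add]
        exact ENNReal.ofReal_le_ofReal (Real.exp_le_exp.2 (hweight C))
    _ = _ := ENNReal.tsum_mul_right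

theorem invMLim_eq_zero_of_map (Φ : Prehistory g₂ → Prehistory g₁) {ε₁ ε₂ lam₁ lam₂ c : ℝ}
    (ν : ℕ → ℕ) (hshadow : ∀ C, C.shadow ε₂ ⊆ (Φ C).shadow ε₁)
    (hlen : ∀ N C, ν N ≤ C.len → N ≤ (Φ C).len)
    (hweight : ∀ C, -lam₁ * ((Φ C).len : ℝ) + (Φ C).consSum ψ₁ ≤
      -lam₂ * (C.len : ℝ) + C.consSum ψ₂ + c)
    (h : invMLim g₂ lam₂ ψ₂ Y ε₂ = 0) : invMLim g₁ lam₁ ψ₁ Y ε₁ = 0 := by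
  rw [invMLim, ENNReal.iSup_eq_zero] at h ⊢
  intro N
  refine nonpos_iff_eq_zero.1 ((invM_le_invM_mul Φ ν hshadow hlen hweight N).trans_eq ?_)
  rw [h (ν N), zero_mul]

theorem invMLim_eq_zero_of_le {ε lam lam' : ℝ} (hlam : lam ≤ lam')
    (h : invMLim g lam ψ Y ε = 0) : invMLim g lam' ψ Y ε = 0 :=
  invMLim_eq_zero_of_map (c := 0) id id (fun _ => subset_rfl) (fun _ _ => id)
    (fun C => by dsimp only [id]; nlinarith [(C.len.cast_nonneg : (0 : ℝ) ≤ C.len)]) h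

theorem invPressEps_le_coe_iff {ε b : ℝ} :
    invPressEps g ψ Y ε ≤ b ↔ ∀ s : ℝ, b < s → invMLim g s ψ Y ε = 0 := by
  refine ⟨fun h s hs => ?_, fun h => le_of_forall_gt_imp_ge_of_dense fun a ha => ?_⟩
  · obtain ⟨l, ⟨lam, rfl, hlam⟩, hl⟩ :=
      sInf_lt_iff.1 (h.trans_lt (EReal.coe_lt_coe_iff.2 hs))
    exact invMLim_eq_zero_of_le (EReal.coe_lt_coe_iff.1 hl).le hlam
  · obtain ⟨s, hbs, hsa⟩ := EReal.lt_iff_exists_real_btwn.1 ha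
    refine (sInf_le ?_).trans hsa.le
    exact ⟨s, rfl, h s (EReal.coe_lt_coe_iff.1 hbs)⟩

theorem invPressEps_le_of_le_add {ε b c : ℝ} (h : ∀ x, ψ₁ x ≤ ψ₂ x + c)
    (hb : invPressEps g ψ₂ Y ε ≤ b) : invPressEps g ψ₁ Y ε ≤ (b + c : ℝ) := by
  rw [invPressEps_le_coe_iff] at hb ⊢
  intro s hs
  refine invMLim_eq_zero_of_map (c := c) id id (fun _ => subset_rfl) (fun _ _ => id)
    (fun C => ?_) (hb (s - c) (by linarith))
  have := C.consSum_le_add h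
  dsimp only [id]
  nlinarith

theorem invPressEps_iterate_birkhoff_le {n : ℕ} (hn : 0 < n) {B ε b : ℝ}
    (hB : ∀ x, |ψ x| ≤ B) (hb : invPressEps g ψ Y ε ≤ b) :
    invPressEps (g^[n]) (birkhoff g ψ n) Y ε ≤ (n * b : ℝ) := by
  have hn' : (0 : ℝ) < n := Nat.cast_pos.2 hn
  rw [invPressEps_le_coe_iff] at hb ⊢
  intro s hs
  have hlam : (n : ℝ) * (s / n) = s := mul_div_cancel₀ s hn'.ne'
  rw [← hlam]
  refine invMLim_eq_zero_of_map (Prehistory.sample n) (n * ·)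
    (c := |s / n| * n + (2 * n + 1) * B) (fun C => C.shadow_subset_sample_shadow n ε)
    (fun N C hC => (Nat.le_div_iff_mul_le hn).2 (by rwa [mul_comm])) (fun C => ?_)
    (hb _ (by rwa [lt_div_iff₀ hn', mul_comm]))
  have hsum := C.consSum_sample_le hn hB
  have hdiv : (C.len : ℝ) = n * (C.len / n : ℕ) + (C.len % n : ℕ) := by
    exact_mod_cast (Nat.div_add_mod C.len n).symm
  have hmod : ((C.len % n : ℕ) : ℝ) ≤ n := by exact_mod_cast (Nat.mod_lt C.len hn).le
  have hrem : s / n * (C.len % n : ℕ) ≤ |s / n| * n :=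
    (mul_le_mul_of_nonneg_right (le_abs_self _) (Nat.cast_nonneg _)).trans
      (mul_le_mul_of_nonneg_left hmod (abs_nonneg _))
  change -(n * (s / n)) * ((C.len / n : ℕ) : ℝ) + _ ≤ _
  rw [hdiv]
  nlinarith

theorem invPressEps_le_of_iterate_birkhoff_le {n : ℕ} (hn : 0 < n) {B ε δ b : ℝ}
    (hB : ∀ x, |ψ x| ≤ B)
    (hδ : ∀ x y : X, dist x y < δ → ∀ j < n, dist (g^[j] x) (g^[j] y) < ε)
    (hb : invPressEps (g^[n]) (birkhoff g ψ n) Y δ ≤ (n * b : ℝ)) :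
    invPressEps g ψ Y ε ≤ b := by
  have hn' : (0 : ℝ) < n := Nat.cast_pos.2 hn
  rw [invPressEps_le_coe_iff] at hb ⊢
  intro s hs
  refine invMLim_eq_zero_of_map (Prehistory.stretch n) id (c := (n + 1) * B)
    (Prehistory.shadow_subset_stretch_shadow hn hδ)
    (fun N C hC => hC.trans (Nat.le_mul_of_pos_left _ hn)) (fun C => ?_)
    (hb (n * s) (by nlinarith))
  have hsum := C.consSum_stretch_add hn ψ
  have hψ0 := (abs_le.1 (hB (C.pts 0))).2
  have hS0 := (abs_le.1 (abs_birkhoff_le (f := g) hB n (C.pts 0))).1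
  change -s * ((n * C.len : ℕ) : ℝ) + _ ≤ _
  push_cast
  nlinarith

theorem invPressEps_le_invPress {ε : ℝ} (hε : 0 < ε) :
    invPressEps g ψ Y ε ≤ invPress g ψ Y :=
  le_iSup₂ (f := fun ε (_ : 0 < ε) => invPressEps g ψ Y ε) ε hε

theorem invPress_le_of_le_add {b c : ℝ} (h : ∀ x, ψ₁ x ≤ ψ₂ x + c)
    (hb : invPress g ψ₂ Y ≤ b) : invPress g ψ₁ Y ≤ (b + c : ℝ) :=
  iSup₂_le fun _ hε => invPressEps_le_of_le_add h ((invPressEps_le_invPress hε).trans hb)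

theorem invPress_iterate_birkhoff_le {n : ℕ} (hn : 0 < n) {B b : ℝ}
    (hB : ∀ x, |ψ x| ≤ B) (hb : invPress g ψ Y ≤ b) :
    invPress (g^[n]) (birkhoff g ψ n) Y ≤ (n * b : ℝ) :=
  iSup₂_le fun _ hε =>
    invPressEps_iterate_birkhoff_le hn hB ((invPressEps_le_invPress hε).trans hb)

theorem invPress_le_of_iterate_birkhoff_le [CompactSpace X] (hg : Continuous g) {n : ℕ}
    (hn : 0 < n) {B b : ℝ} (hB : ∀ x, |ψ x| ≤ B)
    (hb : invPress (g^[n]) (birkhoff g ψ n) Y ≤ (n * b : ℝ)) : invPress g ψ Y ≤ b := by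
  refine iSup₂_le fun ε hε => ?_
  obtain ⟨δ, hδ, hdist⟩ := exists_forall_dist_iterate_lt hg n hε
  exact invPressEps_le_of_iterate_birkhoff_le hn hB hdist
    ((invPressEps_le_invPress hδ).trans hb)

theorem invPress_eq_zero_of_iterate_birkhoff [CompactSpace X] (hg : Continuous g) {n : ℕ}
    (hn : 0 < n) {B : ℝ} (hB : ∀ x, |ψ x| ≤ B)
    (h : invPress (g^[n]) (birkhoff g ψ n) Y = 0) : invPress g ψ Y = 0 := by
  have hle : invPress g ψ Y ≤ ((0 : ℝ) : EReal) :=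
    invPress_le_of_iterate_birkhoff_le hg hn hB (by simpa using h.le)
  refine le_antisymm (by simpa using hle) (not_lt.1 fun hlt => ?_)
  obtain ⟨b, hb, hb0⟩ := EReal.lt_iff_exists_real_btwn.1 hlt
  have hnb : (n : ℝ) * b < 0 :=
    mul_neg_of_pos_of_neg (Nat.cast_pos.2 hn) (EReal.coe_lt_coe_iff.1 hb0)
  have := invPress_iterate_birkhoff_le hn hB hb.le
  rw [h] at this
  exact (EReal.coe_lt_coe_iff.2 hnb).not_ge this

theorem le_of_invPressEps_mul_le {ε δ a b : ℝ} {χ : X → ℝ} (hδ : 0 < δ)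
    (hχ : ∀ x, χ x ≤ -δ) (ha : invPressEps g (fun x => a * χ x) Y ε ≤ 0)
    (hb : 0 ≤ invPressEps g (fun x => b * χ x) Y ε) : b ≤ a := by
  by_contra! hab
  have hshift : ∀ x, b * χ x ≤ a * χ x + (a - b) * δ := fun x => by nlinarith [hχ x]
  have := hb.trans (invPressEps_le_of_le_add hshift (b := 0) (by simpa using ha))
  have : (0 : ℝ) ≤ 0 + (a - b) * δ := by exact_mod_cast this
  nlinarith

theorem le_of_invPress_mul_le {δ a b : ℝ} {χ : X → ℝ} (hδ : 0 < δ)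
    (hχ : ∀ x, χ x ≤ -δ) (ha : invPress g (fun x => a * χ x) Y ≤ 0)
    (hb : 0 ≤ invPress g (fun x => b * χ x) Y) : b ≤ a := by
  by_contra! hab
  have hshift : ∀ x, b * χ x ≤ a * χ x + (a - b) * δ := fun x => by nlinarith [hχ x]
  have := hb.trans (invPress_le_of_le_add hshift (b := 0) (by simpa using ha))
  have : (0 : ℝ) ≤ 0 + (a - b) * δ := by exact_mod_cast this
  nlinarith

end InversePressure

theorem stmt13_general [CompactSpace X] (f : X → X) (hf : Continuous f)
    (φ : X → ℝ) (hφ : Continuous φ) (hneg : ∀ x : X, φ x < 0)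
    (teps : ℕ → ℝ → ℝ) (t : ℕ → ℝ)
    (hteps : ∀ n : ℕ, 1 ≤ n → ∀ ε : ℝ, 0 < ε →
      invPressEps (f^[n]) (fun x => teps n ε * birkhoff f φ n x) Set.univ ε = (0 : EReal))
    (ht : ∀ n : ℕ, 1 ≤ n →
      invPress (f^[n]) (fun x => t n * birkhoff f φ n x) Set.univ = (0 : EReal)) :
    (∀ n p : ℕ, 1 ≤ n → 1 ≤ p → ∀ ε : ℝ, 0 < ε → teps (n * p) ε ≤ teps n ε) ∧
      ∀ n : ℕ, 1 ≤ n → t n = t 1 := by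
  refine ⟨fun n p hn hp ε hε => ?_, fun n hn => ?_⟩
  · have hnp : 0 < n * p := Nat.mul_pos hn hp
    obtain ⟨δ, hδ, hχ⟩ := exists_pos_forall_le_neg (birkhoff_continuous hf hφ (n * p))
      (birkhoff_neg hneg hnp)
    obtain ⟨B, hB⟩ := exists_forall_abs_le ((birkhoff_continuous hf hφ n).const_mul (teps n ε))
    have h := invPressEps_iterate_birkhoff_le hp hB (b := 0) (by simpa using (hteps n hn ε hε).le)
    rw [birkhoff_const_mul, birkhoff_iterate_birkhoff, ← iterate_mul, mul_zero,
      EReal.coe_zero] at h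
    exact le_of_invPressEps_mul_le hδ hχ h (hteps (n * p) hnp ε hε).ge
  · obtain ⟨δ, hδ, hφδ⟩ := exists_pos_forall_le_neg hφ hneg
    obtain ⟨B, hB⟩ := exists_forall_abs_le (hφ.const_mul (t n))
    have hPn : invPress f (fun x => t n * φ x) Set.univ = 0 :=
      invPress_eq_zero_of_iterate_birkhoff hf hn hB (by rw [birkhoff_const_mul]; exact ht n hn)
    have hP1 : invPress f (fun x => t 1 * φ x) Set.univ = 0 := by
      simpa [birkhoff_one] using ht 1 le_rfl
    exact le_antisymm (le_of_invPress_mul_le hδ hφδ hP1.le hPn.ge)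
      (le_of_invPress_mul_le hδ hφδ hPn.le hP1.ge)

theorem stmt13 [CompactSpace X] (f : X → X) (hf : Continuous f) (hfs : Surjective f)
    (φ : X → ℝ) (hφ : Continuous φ) (hneg : ∀ x : X, φ x < 0)
    (hfin : ∀ n : ℕ, 1 ≤ n → ∀ ε : ℝ, 0 < ε → ∀ ψ : X → ℝ, Continuous ψ →
      ∃ r : ℝ, invPressEps (f^[n]) ψ Set.univ ε = (r : EReal))
    (hfin' : ∀ n : ℕ, 1 ≤ n → ∀ ψ : X → ℝ, Continuous ψ →
      ∃ r : ℝ, invPress (f^[n]) ψ Set.univ = (r : EReal))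
    (teps : ℕ → ℝ → ℝ) (t : ℕ → ℝ)
    (hteps : ∀ n : ℕ, 1 ≤ n → ∀ ε : ℝ, 0 < ε →
      invPressEps (f^[n]) (fun x => teps n ε * birkhoff f φ n x) Set.univ ε = (0 : EReal))
    (ht : ∀ n : ℕ, 1 ≤ n →
      invPress (f^[n]) (fun x => t n * birkhoff f φ n x) Set.univ = (0 : EReal)) :
    (∀ n p : ℕ, 1 ≤ n → 1 ≤ p → ∀ ε : ℝ, 0 < ε → teps (n * p) ε ≤ teps n ε) ∧
      ∀ n : ℕ, 1 ≤ n → t n = t 1 :=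
  stmt13_general f hf φ hφ hneg teps t hteps ht
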